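/- The structure-preserving SSNF transformation is satisfiability-preserving: for every FOSL formula φ, φ is satisfiable if and only if L_φ ∧ φ⁺ is satisfiable, where L_φ is a fresh predicate applied to the free variables of φ and φ⁺ is the conjunction of definitional implications (L_{ψ∧ξ} → L_ψ ∧ L_ξ, L_{ψ∨ξ} → L_ψ ∨ L_ξ, L_{∀xψ} → ∀x L_ψ, L_{∃xψ} → ∃x L_ψ, L_{□_e ψ} → □_e L_ψ, L_{◇_e ψ} → ◇_e L_ψ, with polarity-flipped converse implications for negative occurrences) for all subformulas of φ. -/

import Mathlib

namespace FOSL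

/-- Standpoint expressions: e ::= * | s | e∪e | e∩e | e∖e -/
inductive SE (S : Type) : Type
  | star : SE S
  | sym : S → SE S
  | union : SE S → SE S → SE S
  | inter : SE S → SE S → SE S
  | diff : SE S → SE S → SE S

/-- FOSL formulas over predicates `P` (with arities `ar`), constants `C`,
standpoint symbols `S`; variables are natural numbers. -/
inductive Fm (P : Type) (ar : P → ℕ) (C : Type) (S : Type) : Type
  | atom : (p : P) → (Fin (ar p) → C ⊕ ℕ) → Fm P ar C S
  | eq : (C ⊕ ℕ) → (C ⊕ ℕ) → Fm P ar C S
  | neg : Fm P ar C S → Fm P ar C S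
  | conj : Fm P ar C S → Fm P ar C S → Fm P ar C S
  | all : ℕ → Fm P ar C S → Fm P ar C S
  | box : SE S → Fm P ar C S → Fm P ar C S

variable {P : Type} {ar : P → ℕ} {C S : Type}

def Fm.disj (φ ψ : Fm P ar C S) : Fm P ar C S := .neg (.conj (.neg φ) (.neg ψ))
def Fm.impl (φ ψ : Fm P ar C S) : Fm P ar C S := .neg (.conj φ (.neg ψ))
def Fm.ex (x : ℕ) (φ : Fm P ar C S) : Fm P ar C S := .neg (.all x (.neg φ))
def Fm.dia (e : SE S) (φ : Fm P ar C S) : Fm P ar C S := .neg (.box e (.neg φ))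

/-- First-order standpoint structures (constant domain, rigid constants). -/
structure Model (P : Type) (ar : P → ℕ) (C : Type) (S : Type) : Type 1 where
  Dom : Type
  dom_ne : Nonempty Dom
  Prec : Type
  prec_ne : Nonempty Prec
  σ : S → Set Prec
  interpP : Prec → (p : P) → (Fin (ar p) → Dom) → Prop
  interpC : C → Dom

/-- Homomorphic extension of σ to standpoint expressions, with σ(*) = Π. -/
def Model.σE (M : Model P ar C S) : SE S → Set M.Prec
  | .star => Set.univ
  | .sym s => M.σ s
  | .union e1 e2 => M.σE e1 ∪ M.σE e2
  | .inter e1 e2 => M.σE e1 ∩ M.σE e2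
  | .diff e1 e2 => M.σE e1 \ M.σE e2

def Model.termVal (M : Model P ar C S) (v : ℕ → M.Dom) : C ⊕ ℕ → M.Dom
  | .inl c => M.interpC c
  | .inr x => v x

/-- Satisfaction `M, π, v ⊨ φ`. -/
def Model.sat (M : Model P ar C S) : M.Prec → (ℕ → M.Dom) → Fm P ar C S → Prop
  | π, v, .atom p ts => M.interpP π p fun i => M.termVal v (ts i)
  | _, v, .eq t1 t2 => M.termVal v t1 = M.termVal v t2
  | π, v, .neg φ => ¬ M.sat π v φ
  | π, v, .conj φ ψ => M.sat π v φ ∧ M.sat π v ψ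
  | π, v, .all x φ => ∀ δ : M.Dom, M.sat π (Function.update v x δ) φ
  | _, v, .box e φ => ∀ π' ∈ M.σE e, M.sat π' v φ

/-- `M ⊨ φ`: satisfaction at all precisifications and assignments. -/
def Model.satM (M : Model P ar C S) (φ : Fm P ar C S) : Prop :=
  ∀ (π : M.Prec) (v : ℕ → M.Dom), M.sat π v φ

def tmVars : C ⊕ ℕ → Finset ℕ
  | .inl _ => ∅
  | .inr x => {x}

/-- Free variables. -/
def Fm.fv : Fm P ar C S → Finset ℕ
  | .atom _ ts => Finset.univ.biUnion fun i => tmVars (ts i)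
  | .eq t1 t2 => tmVars t1 ∪ tmVars t2
  | .neg φ => φ.fv
  | .conj φ ψ => φ.fv ∪ ψ.fv
  | .all x φ => φ.fv.erase x
  | .box _ φ => φ.fv

/-- Sentential: in every subformula □_e ψ, ψ has no free variables. -/
def Fm.sentential : Fm P ar C S → Prop
  | .atom _ _ => True
  | .eq _ _ => True
  | .neg φ => φ.sentential
  | .conj φ ψ => φ.sentential ∧ ψ.sentential
  | .all _ φ => φ.sentential
  | .box _ φ => φ.fv = ∅ ∧ φ.sentential

/-- Set of subformulas. -/
def Fm.Sub : Fm P ar C S → Set (Fm P ar C S)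
  | .atom p ts => {.atom p ts}
  | .eq t1 t2 => {.eq t1 t2}
  | .neg φ => insert (.neg φ) φ.Sub
  | .conj φ ψ => insert (.conj φ ψ) (φ.Sub ∪ ψ.Sub)
  | .all x φ => insert (.all x φ) φ.Sub
  | .box e φ => insert (.box e φ) φ.Sub

/-- |φ| = number of subformulas of φ. -/
noncomputable def Fm.size (φ : Fm P ar C S) : ℕ := φ.Sub.ncard

def satisfiable (φ : Fm P ar C S) : Prop := ∃ M : Model P ar C S, M.satM φ

/-- n-satisfiable: has a model with exactly n precisifications. -/
def nsatisfiable (n : ℕ) (φ : Fm P ar C S) : Prop :=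
  ∃ M : Model P ar C S, M.satM φ ∧ Nat.card M.Prec = n

def Fm.boxfree : Fm P ar C S → Prop
  | .atom _ _ => True
  | .eq _ _ => True
  | .neg φ => φ.boxfree
  | .conj φ ψ => φ.boxfree ∧ ψ.boxfree
  | .all _ φ => φ.boxfree
  | .box _ _ => False

/-- Standpoint standard normal form: no nested modalities. -/
def Fm.ssnf : Fm P ar C S → Prop
  | .atom _ _ => True
  | .eq _ _ => True
  | .neg φ => φ.ssnf
  | .conj φ ψ => φ.ssnf ∧ ψ.ssnf
  | .all _ φ => φ.ssnf
  | .box _ φ => φ.boxfree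

/-- Restriction of a standpoint structure to a nonempty subset of precisifications. -/
def Model.restrict (M : Model P ar C S) (Ps : Set M.Prec) (h : Ps.Nonempty) :
    Model P ar C S where
  Dom := M.Dom
  dom_ne := M.dom_ne
  Prec := Ps
  prec_ne := h.to_subtype
  σ := fun s => {π : Ps | (π : M.Prec) ∈ M.σ s}
  interpP := fun π => M.interpP π
  interpC := M.interpC

/-! ### Plain first-order logic -/

inductive FO (Q : Type) (arQ : Q → ℕ) (C : Type) : Type
  | tt
  | atom (q : Q) (ts : Fin (arQ q) → C ⊕ ℕ)
  | eq (t1 t2 : C ⊕ ℕ)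
  | neg (φ : FO Q arQ C)
  | conj (φ ψ : FO Q arQ C)
  | all (x : ℕ) (φ : FO Q arQ C)

variable {Q : Type} {arQ : Q → ℕ}

def FO.impl (φ ψ : FO Q arQ C) : FO Q arQ C := .neg (.conj φ (.neg ψ))

def FO.conjList : List (FO Q arQ C) → FO Q arQ C
  | [] => .tt
  | φ :: l => .conj φ (FO.conjList l)

structure FOModel (Q : Type) (arQ : Q → ℕ) (C : Type) : Type 1 where
  Dom : Type
  dom_ne : Nonempty Dom
  interp : (q : Q) → (Fin (arQ q) → Dom) → Prop
  interpC : C → Dom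

def FOModel.termVal (I : FOModel Q arQ C) (v : ℕ → I.Dom) : C ⊕ ℕ → I.Dom
  | .inl c => I.interpC c
  | .inr x => v x

def FOModel.sat (I : FOModel Q arQ C) : (ℕ → I.Dom) → FO Q arQ C → Prop
  | _, .tt => True
  | v, .atom q ts => I.interp q fun i => I.termVal v (ts i)
  | v, .eq t1 t2 => I.termVal v t1 = I.termVal v t2
  | v, .neg φ => ¬ I.sat v φ
  | v, .conj φ ψ => I.sat v φ ∧ I.sat v ψ
  | v, .all x φ => ∀ δ : I.Dom, I.sat (Function.update v x δ) φ

def FOModel.satM (I : FOModel Q arQ C) (φ : FO Q arQ C) : Prop := ∀ v, I.sat v φ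

def fosatisfiable (φ : FO Q arQ C) : Prop := ∃ I : FOModel Q arQ C, I.satM φ

/-! ### Translation to plain FO -/

/-- Translated vocabulary: a predicate P_π for each P and π, and nullary
predicates s_π (for `some s`) and *_π (for `none`). -/
abbrev TQ (P S Pre : Type) : Type := (P × Pre) ⊕ (Option S × Pre)

def tAr (ar : P → ℕ) {S Pre : Type} : TQ P S Pre → ℕ
  | .inl (p, _) => ar p
  | .inr _ => 0

variable {Pre : Type}

/-- trans_E(π, e). -/
def transE (π : Pre) : SE S → FO (TQ P S Pre) (tAr ar) C
  | .star => .atom (.inr (none, π)) Fin.elim0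
  | .sym s => .atom (.inr (some s, π)) Fin.elim0
  | .union e1 e2 => .neg (.conj (.neg (transE π e1)) (.neg (transE π e2)))
  | .inter e1 e2 => .conj (transE π e1) (transE π e2)
  | .diff e1 e2 => .conj (transE π e1) (.neg (transE π e2))

/-- trans_n(π, φ). -/
noncomputable def transF [Fintype Pre] (π : Pre) : Fm P ar C S → FO (TQ P S Pre) (tAr ar) C
  | .atom p ts => .atom (.inl (p, π)) ts
  | .eq t1 t2 => .eq t1 t2
  | .neg φ => .neg (transF π φ)
  | .conj φ ψ => .conj (transF π φ) (transF π ψ)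
  | .all x φ => .all x (transF π φ)
  | .box e φ =>
      FO.conjList ((Finset.univ.toList).map fun π' : Pre =>
        FO.impl (transE π' e) (transF π' φ))

/-- Trans_n(φ) = ⋀_π trans_n(π, φ) ∧ ⋀_π *_π. -/
noncomputable def TransN [Fintype Pre] (φ : Fm P ar C S) : FO (TQ P S Pre) (tAr ar) C :=
  .conj (FO.conjList ((Finset.univ.toList).map fun π : Pre => transF π φ))
        (FO.conjList ((Finset.univ.toList).map fun π : Pre =>
          FO.atom (.inr (none, π)) Fin.elim0))

/-- The plain first-order structure I_M associated with a standpoint structure M. -/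
def Model.toFO (M : Model P ar C S) : FOModel (TQ P S M.Prec) (tAr ar) C where
  Dom := M.Dom
  dom_ne := M.dom_ne
  interp := fun q => match q with
    | .inl (p, π) => fun args => M.interpP π p args
    | .inr (none, _) => fun _ => True
    | .inr (some s, π) => fun _ => π ∈ M.σ s
  interpC := M.interpC


/-! ### The structure-preserving SSNF transformation -/

/-- Extended predicate vocabulary: original predicates plus a fresh predicate
P_ψ for each formula ψ. -/
abbrev EP (P : Type) (ar : P → ℕ) (C S : Type) : Type := P ⊕ Fm P ar C S

/-- Arity of the extended vocabulary: P_ψ has as arity the number of free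
variables of ψ. -/
def eAr (ar : P → ℕ) : EP P ar C S → ℕ
  | .inl p => ar p
  | .inr ψ => ψ.fv.card

/-- Embedding of formulas into the extended vocabulary. -/
def Fm.lift : Fm P ar C S → Fm (EP P ar C S) (eAr ar) C S
  | .atom p ts => .atom (.inl p) ts
  | .eq t1 t2 => .eq t1 t2
  | .neg φ => .neg φ.lift
  | .conj φ ψ => .conj φ.lift ψ.lift
  | .all x φ => .all x φ.lift
  | .box e φ => .box e φ.lift

/-- The fresh atom P_ψ(x₁,…,x_m) applied to the free variables of ψ. -/
noncomputable def freshAtom (ψ : Fm P ar C S) : Fm (EP P ar C S) (eAr ar) C S :=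
  .atom (.inr ψ) (fun i => Sum.inr ((ψ.fv.sort (· ≤ ·)).get
    (Fin.cast (by simp : ψ.fv.card = (ψ.fv.sort (· ≤ ·)).length) i)))

/-- The label L_ψ: the atom itself for literals, ¬L_ξ for ψ = ¬ξ, and the
fresh atom P_ψ(x₁,…,x_m) otherwise. -/
noncomputable def L : Fm P ar C S → Fm (EP P ar C S) (eAr ar) C S
  | .neg ξ => .neg (L ξ)
  | .atom p ts => .atom (.inl p) ts
  | .eq t1 t2 => .eq t1 t2
  | ψ => freshAtom ψ

/-- A valid formula (verum) in the extended vocabulary. -/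
def verum : Fm (EP P ar C S) (eAr ar) C S := .eq (Sum.inr 0) (Sum.inr 0)

mutual
/-- Positive definitional translation ψ⁺. -/
noncomputable def pos : Fm P ar C S → Fm (EP P ar C S) (eAr ar) C S
  | .atom _ _ => verum
  | .eq _ _ => verum
  | .neg ψ => negt ψ
  | .conj ψ ξ => .conj (Fm.impl (L (.conj ψ ξ)) (.conj (L ψ) (L ξ)))
      (.conj (pos ψ) (pos ξ))
  | .all x ψ => .conj (Fm.impl (L (.all x ψ)) (.all x (L ψ))) (pos ψ)
  | .box e ψ => .conj (Fm.impl (L (.box e ψ)) (.box e (L ψ))) (pos ψ)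

/-- Negative definitional translation ψ⁻. -/
noncomputable def negt : Fm P ar C S → Fm (EP P ar C S) (eAr ar) C S
  | .atom _ _ => verum
  | .eq _ _ => verum
  | .neg ψ => pos ψ
  | .conj ψ ξ => .conj (Fm.impl (.conj (L ψ) (L ξ)) (L (.conj ψ ξ)))
      (.conj (negt ψ) (negt ξ))
  | .all x ψ => .conj (Fm.impl (.all x (L ψ)) (L (.all x ψ))) (negt ψ)
  | .box e ψ => .conj (Fm.impl (.box e (L ψ)) (L (.box e ψ))) (negt ψ)
end

/-! Forward direction: interpret each fresh predicate `P_ψ` as `ψ` itself, so that `L_ψ` is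
equivalent to `ψ` and every definitional implication holds. Backward direction: by induction
on `ψ`, in a model where `ψ⁺` is valid `L_ψ` implies `ψ`, and in one where `ψ⁻` is valid `ψ`
implies `L_ψ`. In the modal cases `L_ψ` is consulted at other precisifications, so validity
of `ψ⁺`, not just its truth at the current point, is what the induction carries. -/

namespace Model

lemma termVal_congr (M : Model P ar C S) {v v' : ℕ → M.Dom} (t : C ⊕ ℕ)
    (h : ∀ x ∈ tmVars t, v x = v' x) : M.termVal v t = M.termVal v' t := by
  cases t with
  | inl c => rfl
  | inr x => exact h x (Finset.mem_singleton_self x)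

lemma sat_congr_fv (M : Model P ar C S) (ψ : Fm P ar C S) (π : M.Prec) {v v' : ℕ → M.Dom}
    (h : ∀ x ∈ ψ.fv, v x = v' x) : M.sat π v ψ ↔ M.sat π v' ψ := by
  induction ψ generalizing π v v' with
  | atom p ts =>
    have hargs : (fun i => M.termVal v (ts i)) = fun i => M.termVal v' (ts i) :=
      funext fun i => M.termVal_congr (ts i) fun x hx =>
        h x (Finset.mem_biUnion.mpr ⟨i, Finset.mem_univ i, hx⟩)
    simp only [Model.sat, hargs]
  | eq t1 t2 =>
    simp only [Model.sat,
      M.termVal_congr t1 fun x hx => h x (Finset.mem_union_left _ hx),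
      M.termVal_congr t2 fun x hx => h x (Finset.mem_union_right _ hx)]
  | neg ψ ih => exact not_congr (ih π h)
  | conj ψ ξ ih₁ ih₂ =>
    exact and_congr (ih₁ π fun x hx => h x (Finset.mem_union_left _ hx))
      (ih₂ π fun x hx => h x (Finset.mem_union_right _ hx))
  | all x ψ ih =>
    refine forall_congr' fun δ => ih π fun y hy => ?_
    rcases eq_or_ne y x with rfl | hne
    · simp only [Function.update_self]
    · simp only [Function.update_of_ne hne]
      exact h y (Finset.mem_erase.mpr ⟨hne, hy⟩)
  | box e ψ ih => exact forall₂_congr fun π' _ => ih π' h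

lemma sat_impl (M : Model P ar C S) (π : M.Prec) (v : ℕ → M.Dom) (φ ψ : Fm P ar C S) :
    M.sat π v (φ.impl ψ) ↔ (M.sat π v φ → M.sat π v ψ) := by
  simp only [Fm.impl, Model.sat]
  tauto

abbrev reinterpret {P' : Type} {ar' : P' → ℕ} (M : Model P ar C S)
    (I : M.Prec → (q : P') → (Fin (ar' q) → M.Dom) → Prop) : Model P' ar' C S where
  Dom := M.Dom
  dom_ne := M.dom_ne
  Prec := M.Prec
  prec_ne := M.prec_ne
  σ := M.σ
  interpP := I
  interpC := M.interpC

lemma σE_reinterpret {P' : Type} {ar' : P' → ℕ} (M : Model P ar C S)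
    (I : M.Prec → (q : P') → (Fin (ar' q) → M.Dom) → Prop) (e : SE S) :
    (M.reinterpret I).σE e = M.σE e := by
  induction e with
  | star | sym => rfl
  | union _ _ ih₁ ih₂ | inter _ _ ih₁ ih₂ | diff _ _ ih₁ ih₂ =>
    simp only [Model.σE, ih₁, ih₂]

/-- `P_ψ(a₁,…,a_m)` holds iff `ψ` holds under some assignment sending the free variables
of `ψ`, listed increasingly as in `freshAtom`, to `a₁,…,a_m`. -/
abbrev withLabels (M : Model P ar C S) : Model (EP P ar C S) (eAr ar) C S :=
  M.reinterpret fun π (q : EP P ar C S) => match q with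
    | .inl p => M.interpP π p
    | .inr ψ => fun args => ∃ v : ℕ → M.Dom, M.sat π v ψ ∧
        ∀ i : Fin (ψ.fv.card),
          v ((ψ.fv.sort (· ≤ ·)).get
            (Fin.cast (by simp : ψ.fv.card = (ψ.fv.sort (· ≤ ·)).length) i)) = args i

lemma withLabels_sat_freshAtom (M : Model P ar C S) (ψ : Fm P ar C S) (π : M.Prec)
    (v : ℕ → M.Dom) : M.withLabels.sat π v (freshAtom ψ) ↔ M.sat π v ψ := by
  refine ⟨fun ⟨v', hv', hagree⟩ => (M.sat_congr_fv ψ π fun x hx => ?_).mp hv',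
    fun h => ⟨v, h, fun _ => rfl⟩⟩
  obtain ⟨j, hj⟩ := List.mem_iff_get.mp ((Finset.mem_sort (· ≤ ·)).mpr hx)
  have := hagree (Fin.cast (by simp) j)
  simp only [List.get_eq_getElem, Fin.val_cast] at this hj
  rwa [hj] at this

lemma withLabels_sat_L (M : Model P ar C S) (ψ : Fm P ar C S) (π : M.Prec)
    (v : ℕ → M.Dom) : M.withLabels.sat π v (L ψ) ↔ M.sat π v ψ := by
  induction ψ with
  | atom | eq => rfl
  | neg ψ ih => exact not_congr ih
  | conj | all | box => exact M.withLabels_sat_freshAtom _ π v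

lemma withLabels_satM_pos_and_negt (M : Model P ar C S) (ψ : Fm P ar C S) :
    M.withLabels.satM (pos ψ) ∧ M.withLabels.satM (negt ψ) := by
  induction ψ with
  | atom | eq => exact ⟨fun _ _ => rfl, fun _ _ => rfl⟩
  | neg ψ ih => exact ⟨ih.2, ih.1⟩
  | conj ψ ξ ih₁ ih₂ =>
    refine ⟨fun π v => ⟨?_, ih₁.1 π v, ih₂.1 π v⟩, fun π v => ⟨?_, ih₁.2 π v, ih₂.2 π v⟩⟩ <;>
    simp only [sat_impl, Model.sat, withLabels_sat_L, imp_self]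
  | all x ψ ih =>
    refine ⟨fun π v => ⟨?_, ih.1 π v⟩, fun π v => ⟨?_, ih.2 π v⟩⟩ <;>
    simp only [sat_impl, Model.sat, withLabels_sat_L, imp_self]
  | box e ψ ih =>
    refine ⟨fun π v => ⟨?_, ih.1 π v⟩, fun π v => ⟨?_, ih.2 π v⟩⟩ <;>
    simp only [sat_impl, Model.sat, withLabels_sat_L, σE_reinterpret, imp_self]

abbrev reduct (N : Model (EP P ar C S) (eAr ar) C S) : Model P ar C S :=
  N.reinterpret fun π p => N.interpP π (.inl p)

lemma reduct_sat (N : Model (EP P ar C S) (eAr ar) C S) (ψ : Fm P ar C S) (π : N.Prec)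
    (v : ℕ → N.Dom) : N.reduct.sat π v ψ ↔ N.sat π v ψ.lift := by
  induction ψ generalizing π v with
  | atom | eq => rfl
  | neg ψ ih => exact not_congr (ih π v)
  | conj ψ ξ ih₁ ih₂ => exact and_congr (ih₁ π v) (ih₂ π v)
  | all x ψ ih => exact forall_congr' fun δ => ih π _
  | box e ψ ih =>
    show (∀ π' ∈ N.reduct.σE e, _) ↔ ∀ π' ∈ N.σE e, _
    rw [show N.reduct.σE e = N.σE e from σE_reinterpret _ _ e]
    exact forall₂_congr fun π' _ => ih π' v

lemma sat_lift_of_sat_L_and_sat_L_of_sat_lift (N : Model (EP P ar C S) (eAr ar) C S)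
    (ψ : Fm P ar C S) :
    (N.satM (pos ψ) → ∀ π v, N.sat π v (L ψ) → N.sat π v ψ.lift) ∧
      (N.satM (negt ψ) → ∀ π v, N.sat π v ψ.lift → N.sat π v (L ψ)) := by
  induction ψ with
  | atom | eq => exact ⟨fun _ _ _ => id, fun _ _ _ => id⟩
  | neg ψ ih => exact ⟨fun h π v => mt (ih.2 h π v), fun h π v => mt (ih.1 h π v)⟩
  | conj ψ ξ ih₁ ih₂ =>
    constructor
    · intro h π v hL
      obtain ⟨hψ, hξ⟩ := (N.sat_impl π v _ _).mp (h π v).1 hL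
      exact ⟨ih₁.1 (fun π v => (h π v).2.1) π v hψ, ih₂.1 (fun π v => (h π v).2.2) π v hξ⟩
    · intro h π v ⟨hψ, hξ⟩
      exact (N.sat_impl π v _ _).mp (h π v).1
        ⟨ih₁.2 (fun π v => (h π v).2.1) π v hψ, ih₂.2 (fun π v => (h π v).2.2) π v hξ⟩
  | all x ψ ih =>
    constructor
    · intro h π v hL δ
      exact ih.1 (fun π v => (h π v).2) π _ ((N.sat_impl π v _ _).mp (h π v).1 hL δ)
    · intro h π v hψ
      exact (N.sat_impl π v _ _).mp (h π v).1 fun δ => ih.2 (fun π v => (h π v).2) π _ (hψ δ)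
  | box e ψ ih =>
    constructor
    · intro h π v hL π' hπ'
      exact ih.1 (fun π v => (h π v).2) π' v ((N.sat_impl π v _ _).mp (h π v).1 hL π' hπ')
    · intro h π v hψ
      exact (N.sat_impl π v _ _).mp (h π v).1
        fun π' hπ' => ih.2 (fun π v => (h π v).2) π' v (hψ π' hπ')

end Model

/-- The structure-preserving SSNF transformation is satisfiability-preserving:
φ is satisfiable iff L_φ ∧ φ⁺ is satisfiable. -/
theorem ssnf_transformation_equisatisfiable (P : Type) (ar : P → ℕ) (C S : Type)
    (φ : Fm P ar C S) :
    satisfiable φ ↔ satisfiable (Fm.conj (L φ) (pos φ)) := by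
  constructor
  · rintro ⟨M, hM⟩
    exact ⟨M.withLabels, fun π v =>
      ⟨(M.withLabels_sat_L φ π v).mpr (hM π v), (M.withLabels_satM_pos_and_negt φ).1 π v⟩⟩
  · rintro ⟨N, hN⟩
    have hpos : N.satM (pos φ) := fun π v => (hN π v).2
    exact ⟨N.reduct, fun π v => (N.reduct_sat φ π v).mpr
      ((N.sat_lift_of_sat_L_and_sat_L_of_sat_lift φ).1 hpos π v (hN π v).1)⟩

end FOSL
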